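/- Let λ^1,…,λ^r ∈ P_n, and for m ∈ {n, n+1} let I_m = ⟨λ^1,…,λ^r⟩_{S_m} ⊆ k[x_1,…,x_m] (identifying each λ ∈ P_n with (λ,0) ∈ P_{n+1}). Let μ = (μ_1,…,μ_n,μ_{n+1}) ∈ P_{n+1}, s = s(μ), c = (c_1,…,c_s) ≤ p(μ), and 0 ≤ i ≤ n. Then: (i) if μ_{n+1} = 0, then γ_i^{μ,c}(I_{n+1}) = γ_i^{(μ_1,…,μ_n),c}(I_n); (ii) if μ_{n+1} > 0, then γ_i^{μ,c}(I_{n+1}) = 0 when c_s = 0, and γ_i^{μ,c}(I_{n+1}) = γ_i^{(μ_1,…,μ_n), c−e_s}(I_n) when c_s > 0. -/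

import Mathlib

open scoped BigOperators

noncomputable section
open Classical

/-! ## Generic (labeled) simplicial chain complexes and reduced homology over a field -/

section Homology

variable (K : Type) [Field K] {α : Type}

/-- Index type for chains: elements of `S` whose face (second component) has `j` elements. -/
def ChainIdx (S : Set (α × Finset ℕ)) (j : ℕ) : Type :=
  {q : α × Finset ℕ // q ∈ S ∧ q.2.card = j}

/-- The boundary of a basis element, with the usual simplicial signs. -/
noncomputable def bdElt (S : Set (α × Finset ℕ)) (j : ℕ) (q : ChainIdx S (j + 1)) :
    ChainIdx S j →₀ K :=
  ∑ v ∈ q.1.2,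
    if h : (q.1.1, q.1.2.erase v) ∈ S ∧ (q.1.2.erase v).card = j then
      ((-1 : K) ^ (q.1.2.filter (fun u => u ≤ v)).card) •
        Finsupp.single (⟨(q.1.1, q.1.2.erase v), h⟩ : ChainIdx S j) (1 : K)
    else 0

/-- The simplicial boundary map. -/
noncomputable def bd (S : Set (α × Finset ℕ)) (j : ℕ) :
    (ChainIdx S (j + 1) →₀ K) →ₗ[K] (ChainIdx S j →₀ K) :=
  Finsupp.linearCombination K (bdElt K S j)

/-- Cycles in homological degree `j` (chains are indexed by the cardinality of faces;
degree `j` corresponds to reduced topological degree `j - 1`). -/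
noncomputable def cycles (S : Set (α × Finset ℕ)) : (j : ℕ) → Submodule K (ChainIdx S j →₀ K)
  | 0 => ⊤
  | (i + 1) => LinearMap.ker (bd K S i)

/-- `rhd K S j` is the dimension of the reduced homology group `H̃_{j-1}` of the complex `S`
(the chain groups being finite dimensional, this is `dim` cycles `- dim` boundaries). -/
noncomputable def rhd (S : Set (α × Finset ℕ)) (j : ℕ) : ℕ :=
  Module.finrank K (cycles K S j) -
    Module.finrank K (LinearMap.range (bd K S j) ⊓ cycles K S j : Submodule K _)

/-- `hdim K S j = dim_K H̃_j(S; K)`, for `j : ℤ` (zero for `j ≤ -2`). -/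
noncomputable def hdim (S : Set (α × Finset ℕ)) (j : ℤ) : ℕ :=
  if 0 ≤ j + 1 then rhd K S (j + 1).toNat else 0

/-- View an unlabeled collection of faces as a labeled one (labels in `Unit`). -/
def lab (Δ : Set (Finset ℕ)) : Set (Unit × Finset ℕ) := {q | q.2 ∈ Δ}

/-- Dimension of reduced homology `H̃_{j-1}(Δ; K)` of a collection `Δ` of finite sets. -/
noncomputable def rhd0 (Δ : Set (Finset ℕ)) (j : ℕ) : ℕ := rhd K (lab Δ) j

/-- Dimension of reduced homology `H̃_j(Δ; K)`, `j : ℤ`. -/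
noncomputable def hdim0 (Δ : Set (Finset ℕ)) (j : ℤ) : ℕ := hdim K (lab Δ) j

end Homology

/-! ## Monomial ideals in `k[x_1, …, x_n]`, invariant under the symmetric group -/

section Poly

variable (K : Type) [Field K] (n : ℕ)

/-- The monomial `x^a` in `k[x_1, …, x_n]`. -/
noncomputable def mon (a : Fin n → ℕ) : MvPolynomial (Fin n) K :=
  MvPolynomial.monomial (Finsupp.equivFunOnFinite.symm a) 1

/-- A monomial ideal: an ideal generated by a set of monomials. -/
def IsMonomialIdeal (I : Ideal (MvPolynomial (Fin n) K)) : Prop :=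
  ∃ S : Set (Fin n → ℕ), I = Ideal.span (mon K n '' S)

/-- `I` is invariant under the action of `S_n` permuting the variables. -/
def IsSymmetricIdeal (I : Ideal (MvPolynomial (Fin n) K)) : Prop :=
  ∀ σ : Equiv.Perm (Fin n), Ideal.map (MvPolynomial.rename σ).toRingHom I = I

end Poly

/-! ## Partitions given by blocks `(d_1^{p_1}, …, d_s^{p_s}, 0^{p_{s+1}})` -/

section Blocks

/-- `cumsum p k = p 0 + ⋯ + p (k-1)`. -/
def cumsum (p : ℕ → ℕ) (k : ℕ) : ℕ := ∑ j ∈ Finset.range k, p j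

/-- The index of the block (among blocks `0, …, s`) containing position `i`,
for blocks of sizes `p 0, …, p (s-1)` followed by a final block. -/
def blkOf (p : ℕ → ℕ) (s i : ℕ) : ℕ :=
  ((Finset.range s).filter fun k => cumsum p (k + 1) ≤ i).card

/-- The partition `μ = (d_0^{p_0}, …, d_{s-1}^{p_{s-1}}, 0^{p_s})` (0-indexed blocks),
as a function of the position `i ∈ {0, …, n-1}` where `n = cumsum p (s+1)`. -/
def muOf (s : ℕ) (d p : ℕ → ℕ) (i : ℕ) : ℕ :=
  if blkOf p s i < s then d (blkOf p s i) else 0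

/-- The partition `μ ∖ c`, obtained from `μ` by replacing, for each `k`, the last `c k` of
the parts equal to `d k` by `d k - 1`. -/
def muMinus (s : ℕ) (d p c : ℕ → ℕ) (i : ℕ) : ℕ :=
  if blkOf p s i < s then
    (if p (blkOf p s i) - c (blkOf p s i) ≤ i - cumsum p (blkOf p s i) then
      d (blkOf p s i) - 1 else d (blkOf p s i))
  else 0

/-- Indicator vector of a finite set `F`. -/
def eF (F : Finset ℕ) (j : ℕ) : ℕ := if j ∈ F then 1 else 0

end Blocks

/-! ## The simplicial complexes `Δ^{μ,c}(I)` and `Γ^{μ,c}(I)` -/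

section Complexes

variable (K : Type) [Field K] (n : ℕ)

/-- The simplicial complex `Δ^{μ,c}(I) = {F ⊆ [s] : μ ∖ (c + e_F) ∈ P(I)}` (vertices are
`0, …, s-1`), for `μ = (d_0^{p_0}, …, d_{s-1}^{p_{s-1}}, 0^{p_s})` and `c ≤ p(μ)`. -/
def DeltaCx (I : Ideal (MvPolynomial (Fin n) K)) (s : ℕ) (d p c : ℕ → ℕ) :
    Set (Finset ℕ) :=
  {F | F ⊆ Finset.range s ∧
    mon K n (fun i => muMinus s d p (fun j => c j + eF F j) i.val) ∈ I}

/-- The Alexander dual complex `Γ^{μ,c}(I) = {F ⊆ [s] : μ ∖ (c + e_{[s]∖F}) ∈ O(I)}`. -/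
def GammaCx (I : Ideal (MvPolynomial (Fin n) K)) (s : ℕ) (d p c : ℕ → ℕ) :
    Set (Finset ℕ) :=
  {F | F ⊆ Finset.range s ∧
    mon K n (fun i => muMinus s d p
      (fun j => c j + (if j < s ∧ j ∉ F then 1 else 0)) i.val) ∉ I}

/-- `γ_i^{μ,c}(I) = dim_K H̃_{i-1}(Δ^{μ,c}(I); K)`. -/
noncomputable def gammaDim (I : Ideal (MvPolynomial (Fin n) K)) (s : ℕ) (d p c : ℕ → ℕ)
    (i : ℕ) : ℕ :=
  rhd0 K (DeltaCx K n I s d p c) i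

end Complexes

/-! ## Multigraded Tor via the Koszul complex

For a monomial ideal `I`, the multidegree-`a` strand of the Koszul complex `K_•(I)` is the
(shifted) reduced chain complex of the simplicial complex
`Δ_a^I = {F ⊆ [n] : a - e_F ≥ 0, x^{a - e_F} ∈ I}`, so that
`dim_K Tor_i(I, K)_a = dim_K H̃_{i-1}(Δ_a^I; K)`, and similarly for `R/I` with the
condition `x^{a-e_F} ∉ I`. -/

section Tor

variable (K : Type) [Field K] (n : ℕ)

/-- The Koszul simplicial complex of the ideal `I` in multidegree `a`. -/
def KosI (I : Ideal (MvPolynomial (Fin n) K)) (a : Fin n → ℕ) : Set (Finset ℕ) :=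
  {F | F ⊆ Finset.range n ∧ (∀ i : Fin n, (i : ℕ) ∈ F → 1 ≤ a i) ∧
    mon K n (fun i => a i - eF F i.val) ∈ I}

/-- The Koszul complex of `R/I` in multidegree `a`. -/
def KosQ (I : Ideal (MvPolynomial (Fin n) K)) (a : Fin n → ℕ) : Set (Finset ℕ) :=
  {F | F ⊆ Finset.range n ∧ (∀ i : Fin n, (i : ℕ) ∈ F → 1 ≤ a i) ∧
    mon K n (fun i => a i - eF F i.val) ∉ I}

/-- `dim_K Tor_i(I, K)_a`, for a monomial ideal `I` and a multidegree `a ∈ ℤ^n`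
(components with a negative coordinate vanish, so only `a ∈ ℕ^n` is needed). -/
noncomputable def torDim (I : Ideal (MvPolynomial (Fin n) K)) (i : ℕ) (a : Fin n → ℕ) : ℕ :=
  rhd0 K (KosI K n I a) i

/-- `dim_K Tor_i(R/I, K)_a` for a monomial ideal `I`. -/
noncomputable def torQDim (I : Ideal (MvPolynomial (Fin n) K)) (i : ℕ) (a : Fin n → ℕ) : ℕ :=
  rhd0 K (KosQ K n I a) i

/-- `dim_K Tor_i(I, K)_{⟨μ⟩}`: the sum of `dim_K Tor_i(I, K)_a` over all rearrangements `a`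
of the partition `μ`. -/
noncomputable def torDimSym (I : Ideal (MvPolynomial (Fin n) K)) (i : ℕ) (μ : Fin n → ℕ) : ℕ :=
  ∑ a ∈ Finset.image (fun σ : Equiv.Perm (Fin n) => μ ∘ σ) Finset.univ, torDim K n I i a

/-- `dim_K Tor_i(R/I, K)_{⟨μ⟩}`. -/
noncomputable def torQDimSym (I : Ideal (MvPolynomial (Fin n) K)) (i : ℕ) (μ : Fin n → ℕ) : ℕ :=
  ∑ a ∈ Finset.image (fun σ : Equiv.Perm (Fin n) => μ ∘ σ) Finset.univ, torQDim K n I i a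

end Tor

/-! ## Extended partitions in `P_n^∞` and the dual generators of an `S_n`-invariant
monomial ideal -/

section ExtendedPartitions

variable (K : Type) [Field K] (n : ℕ)

/-- `ℓ(μ)`: the number of entries of `μ ∈ P_n^∞` equal to `∞`. -/
def ellInf (μ : Fin n → ℕ∞) : ℕ := (Finset.univ.filter fun i => μ i = ⊤).card

/-- The largest finite entry of `μ ∈ P_n^∞` (i.e. the first finite entry, `μ` being
weakly decreasing). -/
def topVal (μ : Fin n → ℕ∞) : ℕ := Finset.univ.sup fun i => (μ i).toNat

/-- `μ^+ ∈ P_n`: each `∞` entry of `μ` is replaced by (largest finite entry)` + 1`. -/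
def plusOf (μ : Fin n → ℕ∞) (i : Fin n) : ℕ :=
  if μ i = ⊤ then topVal n μ + 1 else (μ i).toNat

/-- `μ̃ = μ^+ + (0^{ℓ(μ)}, 1^{n - ℓ(μ)}) ∈ P_n`. -/
def tildeOf (μ : Fin n → ℕ∞) (i : Fin n) : ℕ :=
  if μ i = ⊤ then topVal n μ + 1 else (μ i).toNat + 1

/-- The ideal `Q_μ = ∩_{σ ∈ S_n} σ((x_k^{μ_k + 1}, …, x_n^{μ_n + 1}))`, where
`μ_k, …, μ_n` are the finite entries of `μ ∈ P_n^∞`. -/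
noncomputable def Qgen (μ : Fin n → ℕ∞) : Ideal (MvPolynomial (Fin n) K) :=
  ⨅ σ : Equiv.Perm (Fin n),
    Ideal.map (MvPolynomial.rename σ).toRingHom
      (Ideal.span {g | ∃ i : Fin n, μ i ≠ ⊤ ∧ g = MvPolynomial.X i ^ ((μ i).toNat + 1)})

/-- `Λ` is the (finite) set of dual generators of `I`, i.e. `I = ∩_{μ ∈ Λ} Q_μ` is the
irredundant presentation of `I` by ideals `Q_μ`. -/
def IsDualPresentation (I : Ideal (MvPolynomial (Fin n) K))
    (Λ : Finset (Fin n → ℕ∞)) : Prop :=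
  (∀ μ ∈ Λ, Antitone μ) ∧ (I = ⨅ μ ∈ Λ, Qgen K n μ) ∧
    ∀ μ ∈ Λ, I ≠ ⨅ ρ ∈ Λ, ⨅ _ : ρ ≠ μ, Qgen K n ρ

/-- The partial order `≼` on dual generators: `μ ≼ ρ` iff `μ̃ ≤ ρ̃` (componentwise) and
`ℓ(μ) - ℓ(ρ) ≤ |ρ̃| - |μ̃|`. -/
def preceq (μ ρ : Fin n → ℕ∞) : Prop :=
  (∀ i, tildeOf n μ i ≤ tildeOf n ρ i) ∧
    (∑ i, tildeOf n μ i) + ellInf n μ ≤ (∑ i, tildeOf n ρ i) + ellInf n ρ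

/-- The extended partition `ρ = (∞^{p_0}, d_1^{p_1}, …, d_s^{p_s}) ∈ P_n^∞`
(so `n = p 0 + p 1 + ⋯ + p s`), as a function of the position `i ∈ {0, …, n-1}`. -/
def rhoOf (s : ℕ) (d p : ℕ → ℕ) (i : ℕ) : ℕ∞ :=
  if blkOf p (s + 1) i = 0 then ⊤ else ((d (blkOf p (s + 1) i) : ℕ) : ℕ∞)

end ExtendedPartitions

/-- Extend a partition of `P_n` to `P_m` (`m ≥ n`) by appending zeros. -/
def extFun (n m : ℕ) (a : Fin n → ℕ) (t : Fin m) : ℕ :=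
  if h : (t : ℕ) < n then a ⟨t, h⟩ else 0

/-- The ideal `I_m = ⟨λ^1, …, λ^r⟩_{S_m} ⊆ k[x_1, …, x_m]` generated by the `S_m`-orbits
of the monomials of the partitions `L j ∈ P_n` (extended by zeros). -/
def symIdealM (K : Type) [Field K] (m n r : ℕ) (L : Fin r → Fin n → ℕ) :
    Ideal (MvPolynomial (Fin m) K) :=
  Ideal.span {f | ∃ (j : Fin r) (σ : Equiv.Perm (Fin m)),
    f = MvPolynomial.rename σ (mon K m (extFun n m (L j)))}

/-!
Since `μ ∖ c` is a partition, its last entry is minimal, and a monomial `x^a` whose last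
exponent is minimal lies in `I_{n+1}` iff `x^{(a_1, …, a_n)}` lies in `I_n`: a permutation
placing a generator below `a` can be modified to fix the last variable, in which every
generator has exponent `0`. Hence `Δ^{μ,c}(I_{n+1})` is the complex defined by the first `n`
entries of the partitions `μ ∖ (c + e_F)` and the ideal `I_n`.

If `μ_{n+1} = 0`, dropping the last entry only shortens the block of zeros. If `μ_{n+1} > 0`
and `c_s > 0`, it removes one of the decremented entries of the last block, which amounts to
passing to `c - e_s`. If `c_s = 0`, the first `n` entries of `μ ∖ (c + e_F)` do not depend on
whether `s ∈ F`, so the complex is a cone with apex `s`, and its reduced homology vanishes by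
the contracting homotopy `G ↦ ±(G ∪ {s})`.
-/

section Membership

variable {K : Type} [Field K]

theorem mon_mem_symIdealM_iff (m n r : ℕ) (L : Fin r → Fin n → ℕ) (a : Fin m → ℕ) :
    mon K m a ∈ symIdealM K m n r L ↔
      ∃ (j : Fin r) (σ : Equiv.Perm (Fin m)), ∀ t, extFun n m (L j) (σ t) ≤ a t := by
  have hgen : {f : MvPolynomial (Fin m) K | ∃ (j : Fin r) (σ : Equiv.Perm (Fin m)),
      f = MvPolynomial.rename σ (mon K m (extFun n m (L j)))} =
      (fun u => MvPolynomial.monomial u (1 : K)) ''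
        {u | ∃ (j : Fin r) (σ : Equiv.Perm (Fin m)),
          u = Finsupp.mapDomain σ (Finsupp.equivFunOnFinite.symm (extFun n m (L j)))} := by
    ext f
    constructor
    · rintro ⟨j, σ, rfl⟩
      exact ⟨_, ⟨j, σ, rfl⟩, (MvPolynomial.rename_monomial σ _ 1).symm⟩
    · rintro ⟨u, ⟨j, σ, rfl⟩, rfl⟩
      exact ⟨j, σ, (MvPolynomial.rename_monomial σ _ 1).symm⟩
  rw [symIdealM, hgen, MvPolynomial.mem_ideal_span_monomial_image, mon,
    MvPolynomial.support_monomial, if_neg one_ne_zero]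
  simp only [Finset.mem_singleton, forall_eq, Set.mem_ofPred_eq]
  constructor
  · rintro ⟨_, ⟨j, σ, rfl⟩, hle⟩
    refine ⟨j, σ.symm, fun t => ?_⟩
    simpa [Finsupp.mapDomain_equiv_apply] using hle t
  · rintro ⟨j, σ, hle⟩
    refine ⟨_, ⟨j, σ.symm, rfl⟩, fun t => ?_⟩
    simpa [Finsupp.mapDomain_equiv_apply] using hle t

theorem extFun_self (n : ℕ) (g : Fin n → ℕ) (t : Fin n) : extFun n n g t = g t :=
  dif_pos t.isLt

theorem extFun_castSucc (n : ℕ) (g : Fin n → ℕ) (t : Fin n) :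
    extFun n (n + 1) g t.castSucc = g t :=
  dif_pos t.isLt

theorem extFun_last (n : ℕ) (g : Fin n → ℕ) : extFun n (n + 1) g (Fin.last n) = 0 :=
  dif_neg (lt_irrefl n)

theorem mon_mem_symIdealM_succ_iff (n r : ℕ) (L : Fin r → Fin n → ℕ)
    (a : Fin (n + 1) → ℕ) (hmin : ∀ t, a (Fin.last n) ≤ a t) :
    mon K (n + 1) a ∈ symIdealM K (n + 1) n r L ↔
      mon K n (fun t => a t.castSucc) ∈ symIdealM K n n r L := by
  rw [mon_mem_symIdealM_iff, mon_mem_symIdealM_iff]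
  let e : Fin (n + 1) ≃ Option (Fin n) := finSuccEquivLast
  constructor
  · rintro ⟨j, σ, hσ⟩
    -- `removeNone` reroutes the variable that `σ` sends to the last one (exponent `0` in
    -- `λ^j`) to `σ (last)`, which costs nothing because `a` is minimal at `last`.
    set E : Option (Fin n) ≃ Option (Fin n) := e.symm.trans (σ.trans e)
    refine ⟨j, E.removeNone, fun t => ?_⟩
    have hcases : σ t.castSucc = (E.removeNone t).castSucc ∨
        σ (Fin.last n) = (E.removeNone t).castSucc := by
      rcases hE : E (some t) with _ | y
      · right
        have := Equiv.removeNone_none E hE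
        simp only [E, e, Equiv.trans_apply, finSuccEquivLast_symm_none] at this
        simpa using congrArg finSuccEquivLast.symm this.symm
      · left
        have := Equiv.removeNone_some E ⟨y, hE⟩
        simp only [E, e, Equiv.trans_apply, finSuccEquivLast_symm_some] at this
        simpa using congrArg finSuccEquivLast.symm this.symm
    rw [extFun_self]
    rcases hcases with h | h
    · simpa [h, extFun_castSucc] using hσ t.castSucc
    · have := hσ (Fin.last n)
      rw [h, extFun_castSucc] at this
      exact this.trans (hmin _)
  · rintro ⟨j, τ, hτ⟩
    refine ⟨j, e.trans (τ.optionCongr.trans e.symm), Fin.lastCases ?_ fun t => ?_⟩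
    · simp [e, extFun_last]
    · simpa [e, extFun_castSucc, extFun_self] using hτ t

end Membership

section Cone

variable (K : Type) [Field K] (Δ : Set (Finset ℕ)) (v : ℕ)

def IsCone : Prop := ∀ F, F ∈ Δ ↔ insert v F ∈ Δ

/-- The sign of `G.erase u` in the boundary of `G`, as in `bdElt`. -/
def faceSign (G : Finset ℕ) (u : ℕ) : K := (-1) ^ (G.filter fun w => w ≤ u).card

/-- The basis chain `[G]`, and `0` when `G` is not a face with `j` vertices. -/
def faceVec (j : ℕ) (G : Finset ℕ) : ChainIdx (lab Δ) j →₀ K :=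
  if h : ((), G) ∈ lab Δ ∧ G.card = j then
    Finsupp.single (⟨((), G), h⟩ : ChainIdx (lab Δ) j) 1
  else 0

/-- The contracting homotopy `G ↦ ± (G ∪ {v})` of a cone with apex `v`. -/
def coneHom (j : ℕ) :
    (ChainIdx (lab Δ) j →₀ K) →ₗ[K] (ChainIdx (lab Δ) (j + 1) →₀ K) :=
  Finsupp.linearCombination K fun q =>
    if v ∈ q.1.2 then 0
    else faceSign K (insert v q.1.2) v • faceVec K Δ (j + 1) (insert v q.1.2)

variable {K Δ v}

theorem faceSign_mul_self (G : Finset ℕ) (u : ℕ) : faceSign K G u * faceSign K G u = 1 := by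
  rw [faceSign, ← mul_pow, neg_one_mul, neg_neg, one_pow]

theorem faceSign_insert_mul {G : Finset ℕ} {u : ℕ} (hu : u ∈ G) (hv : v ∉ G) :
    faceSign K (insert v G) v * faceSign K (insert v G) u =
      -(faceSign K G u * faceSign K (insert v (G.erase u)) v) := by
  have huv : u ≠ v := ne_of_mem_of_not_mem hu hv
  have hvv : v ∉ G.filter fun w => w ≤ v := fun h => hv (Finset.mem_filter.1 h).1
  have hvu : v ∉ (G.filter fun w => w ≤ v).erase u := fun h => hvv (Finset.mem_of_mem_erase h)
  simp only [faceSign, Finset.filter_insert, le_refl, if_true, Finset.card_insert_of_notMem hvu,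
    Finset.card_insert_of_notMem hvv, Finset.filter_erase]
  rcases huv.lt_or_gt with h | h
  · have hu' : u ∈ G.filter fun w => w ≤ v := Finset.mem_filter.2 ⟨hu, h.le⟩
    rw [if_neg h.not_ge, Finset.card_erase_of_mem hu',
      Nat.sub_add_cancel (Finset.card_pos.2 ⟨u, hu'⟩), pow_succ]
    ring
  · have hu' : u ∉ G.filter fun w => w ≤ v := fun h' => h.not_ge (Finset.mem_filter.1 h').2
    rw [if_pos h.le, Finset.card_insert_of_notMem fun h => hv (Finset.mem_filter.1 h).1,
      Finset.erase_eq_of_notMem hu', pow_succ]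
    ring

theorem bd_faceVec {j : ℕ} {G : Finset ℕ} (hG : G ∈ Δ) (hc : G.card = j + 1) :
    bd K (lab Δ) j (faceVec K Δ (j + 1) G) =
      ∑ u ∈ G, faceSign K G u • faceVec K Δ j (G.erase u) := by
  rw [faceVec, dif_pos ⟨hG, hc⟩]
  refine ((Finsupp.linearCombination_single K 1 _).trans (one_smul K _)).trans ?_
  refine Finset.sum_congr rfl fun u _ => ?_
  by_cases h : ((), G.erase u) ∈ lab Δ ∧ (G.erase u).card = j
  · rw [faceVec, dif_pos h]
    exact dif_pos h
  · rw [faceVec, dif_neg h, smul_zero]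
    exact dif_neg h

theorem coneHom_faceVec (hΔ : IsCone Δ v) (j : ℕ) (G : Finset ℕ) :
    coneHom K Δ v j (faceVec K Δ j G) =
      if v ∈ G then 0 else faceSign K (insert v G) v • faceVec K Δ (j + 1) (insert v G) := by
  by_cases hG : ((), G) ∈ lab Δ ∧ G.card = j
  · rw [faceVec, dif_pos hG]
    exact (Finsupp.linearCombination_single K 1 _).trans (one_smul K _)
  · rw [faceVec, dif_neg hG, map_zero]
    split_ifs with hv
    · rfl
    · rw [faceVec, dif_neg, smul_zero]
      rintro ⟨hvG, hc⟩
      exact hG ⟨(hΔ G).2 hvG, by rw [Finset.card_insert_of_notMem hv] at hc; omega⟩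

theorem bd_coneHom_faceVec (hΔ : IsCone Δ v) {j : ℕ} {G : Finset ℕ} (hv : v ∉ G)
    (hG : G ∈ Δ) (hc : G.card = j) :
    bd K (lab Δ) j (coneHom K Δ v j (faceVec K Δ j G)) = faceVec K Δ j G +
      ∑ u ∈ G, (faceSign K (insert v G) v * faceSign K (insert v G) u) •
        faceVec K Δ j (insert v (G.erase u)) := by
  rw [coneHom_faceVec hΔ, if_neg hv, map_smul,
    bd_faceVec ((hΔ G).1 hG) (by rw [Finset.card_insert_of_notMem hv, hc]),
    Finset.sum_insert hv, Finset.erase_insert hv, smul_add, smul_smul, faceSign_mul_self,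
    one_smul, Finset.smul_sum]
  congr 1
  refine Finset.sum_congr rfl fun u hu => ?_
  rw [smul_smul, Finset.erase_insert_of_ne (ne_of_mem_of_not_mem hu hv).symm]

theorem bd_coneHom_add_coneHom_bd_faceVec (hΔ : IsCone Δ v) {j : ℕ} {G : Finset ℕ}
    (hG : G ∈ Δ) (hc : G.card = j + 1) :
    bd K (lab Δ) (j + 1) (coneHom K Δ v (j + 1) (faceVec K Δ (j + 1) G)) +
      coneHom K Δ v j (bd K (lab Δ) j (faceVec K Δ (j + 1) G)) = faceVec K Δ (j + 1) G := by
  by_cases hv : v ∈ G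
  · rw [coneHom_faceVec hΔ, if_pos hv, map_zero, zero_add, bd_faceVec hG hc, map_sum,
      Finset.sum_eq_single_of_mem v hv]
    · rw [map_smul, coneHom_faceVec hΔ, if_neg (Finset.notMem_erase v G), Finset.insert_erase hv,
        smul_smul, faceSign_mul_self, one_smul]
    · intro u _ hu
      rw [map_smul, coneHom_faceVec hΔ, if_pos (Finset.mem_erase.2 ⟨Ne.symm hu, hv⟩),
        smul_zero]
  · rw [bd_coneHom_faceVec hΔ hv hG hc, bd_faceVec hG hc, map_sum, add_assoc,
      ← Finset.sum_add_distrib, add_eq_left]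
    refine Finset.sum_eq_zero fun u hu => ?_
    rw [map_smul, coneHom_faceVec hΔ, if_neg fun h => hv (Finset.mem_of_mem_erase h), smul_smul,
      ← add_smul, faceSign_insert_mul hu hv, neg_add_cancel, zero_smul]

theorem single_eq_smul_faceVec {j : ℕ} (q : ChainIdx (lab Δ) j) (b : K) :
    Finsupp.single q b = b • faceVec K Δ j q.1.2 := by
  rw [faceVec, dif_pos q.2]
  exact (Finsupp.smul_single_one q b).symm

theorem bd_coneHom_zero (hΔ : IsCone Δ v) (x : ChainIdx (lab Δ) 0 →₀ K) :
    bd K (lab Δ) 0 (coneHom K Δ v 0 x) = x := by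
  induction x using Finsupp.induction_linear with
  | zero => simp
  | add x y hx hy => rw [map_add, map_add, hx, hy]
  | single q b =>
    have hG : q.1.2 = ∅ := Finset.card_eq_zero.1 q.2.2
    rw [single_eq_smul_faceVec, map_smul, map_smul,
      bd_coneHom_faceVec hΔ (by simp [hG]) q.2.1 q.2.2]
    simp [hG]

theorem bd_coneHom_add_coneHom_bd (hΔ : IsCone Δ v) (j : ℕ)
    (x : ChainIdx (lab Δ) (j + 1) →₀ K) :
    bd K (lab Δ) (j + 1) (coneHom K Δ v (j + 1) x) + coneHom K Δ v j (bd K (lab Δ) j x) =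
      x := by
  induction x using Finsupp.induction_linear with
  | zero => simp
  | add x y hx hy => rw [map_add, map_add, map_add, map_add, add_add_add_comm, hx, hy]
  | single q b =>
    rw [single_eq_smul_faceVec, map_smul, map_smul, map_smul, map_smul, ← smul_add,
      bd_coneHom_add_coneHom_bd_faceVec hΔ q.2.1 q.2.2]

theorem rhd0_eq_zero_of_isCone (hΔ : IsCone Δ v) (j : ℕ) : rhd0 K Δ j = 0 := by
  have hcycles : cycles K (lab Δ) j ≤ LinearMap.range (bd K (lab Δ) j) := by
    cases j with
    | zero => exact fun x _ => ⟨coneHom K Δ v 0 x, bd_coneHom_zero hΔ x⟩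
    | succ j =>
      intro x hx
      refine ⟨coneHom K Δ v (j + 1) x, ?_⟩
      have := bd_coneHom_add_coneHom_bd hΔ j x
      rwa [LinearMap.mem_ker.1 hx, map_zero, add_zero] at this
  rw [rhd0, rhd, inf_eq_right.2 hcycles, Nat.sub_self]

end Cone

section Blocks

variable {s : ℕ} {d p : ℕ → ℕ}

theorem cumsum_succ (p : ℕ → ℕ) (k : ℕ) : cumsum p (k + 1) = cumsum p k + p k :=
  Finset.sum_range_succ p k

theorem cumsum_mono (p : ℕ → ℕ) : Monotone (cumsum p) := fun _ _ h =>
  Finset.sum_le_sum_of_subset (Finset.range_subset_range.2 h)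

theorem cumsum_congr {p' : ℕ → ℕ} {k : ℕ} (h : ∀ j < k, p' j = p j) :
    cumsum p' k = cumsum p k :=
  Finset.sum_congr rfl fun j hj => h j (Finset.mem_range.1 hj)

theorem blkOf_mono (p : ℕ → ℕ) (s : ℕ) : Monotone (blkOf p s) := fun _ _ h =>
  Finset.card_le_card (Finset.monotone_filter_right _ fun _ _ hk => hk.trans h)

theorem blkOf_of_cumsum_le {i : ℕ} (h : cumsum p s ≤ i) : blkOf p s i = s := by
  rw [blkOf, Finset.filter_true_of_mem, Finset.card_range]
  exact fun k hk => (cumsum_mono p (Finset.mem_range.1 hk)).trans h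

theorem cumsum_blkOf_le (p : ℕ → ℕ) (s i : ℕ) : cumsum p (blkOf p s i) ≤ i := by
  by_contra! h
  have hsub : (Finset.range s).filter (fun k => cumsum p (k + 1) ≤ i) ⊆
      Finset.range (blkOf p s i - 1) := by
    intro k hk
    have hk' := (Finset.mem_filter.1 hk).2
    have : k + 1 < blkOf p s i := by
      by_contra! h'
      exact absurd (cumsum_mono p h') (by omega)
    exact Finset.mem_range.2 (by omega)
  have hcard := Finset.card_le_card hsub
  rw [Finset.card_range, ← blkOf] at hcard
  have hb : blkOf p s i = 0 := by omega
  rw [hb] at h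
  exact Nat.not_lt_zero i h

theorem lt_cumsum_of_muOf_pos {i : ℕ} (h : 0 < muOf s d p i) : i < cumsum p s := by
  by_contra! hle
  rw [muOf, if_neg (blkOf_of_cumsum_le hle).not_lt] at h
  exact h.false

theorem muMinus_antitone (hd : ∀ k, k + 1 < s → d (k + 1) < d k) (p c : ℕ → ℕ) :
    Antitone (muMinus s d p c) := by
  intro i i' h
  have hb := blkOf_mono p s h
  unfold muMinus
  by_cases hb' : blkOf p s i' < s
  · rw [if_pos hb', if_pos (hb.trans_lt hb')]
    rcases hb.lt_or_eq with hlt | heq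
    · have : d (blkOf p s i') < d (blkOf p s i) :=
        strictAntiOn_Iic_of_succ_lt (n := s - 1) (fun m hm => hd m (by omega))
          (Set.mem_Iic.2 (by omega)) (Set.mem_Iic.2 (by omega)) hlt
      split_ifs <;> omega
    · rw [heq]
      split_ifs <;> omega
  · rw [if_neg hb']
    exact Nat.zero_le _

theorem muMinus_congr_sizes {p' : ℕ → ℕ} (h : ∀ k < s, p' k = p k) (c : ℕ → ℕ) :
    muMinus s d p' c = muMinus s d p c := by
  have hcum : ∀ k ≤ s, cumsum p' k = cumsum p k := fun k hk =>
    cumsum_congr fun j hj => h j (by omega)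
  funext i
  have hblk : blkOf p' s i = blkOf p s i := by
    simp only [blkOf]
    congr 1
    exact Finset.filter_congr fun k hk => by rw [hcum (k + 1) (Finset.mem_range.1 hk)]
  unfold muMinus
  rw [hblk]
  by_cases hb : blkOf p s i < s
  · rw [if_pos hb, if_pos hb, h _ hb, hcum _ hb.le]
  · rw [if_neg hb, if_neg hb]

theorem pos_of_lt_cumsum {i : ℕ} (hi : i < cumsum p s) : 0 < s :=
  Nat.pos_of_ne_zero fun hs => by simp [hs, cumsum] at hi

theorem muMinus_shrink_lastBlock {c c' : ℕ → ℕ} {i : ℕ} (hi : i + 1 < cumsum p s)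
    (hc : c' (s - 1) + 1 = c (s - 1)) (hc' : ∀ k < s - 1, c' k = c k) :
    muMinus s d (fun k => if k = s - 1 then p k - 1 else p k) c' i = muMinus s d p c i := by
  set p' : ℕ → ℕ := fun k => if k = s - 1 then p k - 1 else p k
  have hp' : p' (s - 1) = p (s - 1) - 1 := if_pos rfl
  have hp'_ne : ∀ k ≠ s - 1, p' k = p k := fun k hk => if_neg hk
  have hs := pos_of_lt_cumsum (Nat.lt_of_succ_lt hi)
  have hcum : ∀ k ≤ s - 1, cumsum p' k = cumsum p k := fun k hk =>
    cumsum_congr fun j hj => hp'_ne j (by omega)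
  have hcum_s : cumsum p s ≤ cumsum p' s + 1 := by
    have h1 := cumsum_succ p (s - 1)
    have h2 := cumsum_succ p' (s - 1)
    rw [Nat.sub_add_cancel hs] at h1 h2
    rw [h1, h2, hcum _ le_rfl, hp']
    omega
  have hblk : blkOf p' s i = blkOf p s i := by
    simp only [blkOf]
    congr 1
    refine Finset.filter_congr fun k hk => ?_
    rcases Nat.lt_or_ge (k + 1) s with hk' | hk'
    · rw [hcum _ (by omega)]
    · have hks : k + 1 = s := by have := Finset.mem_range.1 hk; omega
      rw [hks]
      omega
  unfold muMinus
  rw [hblk]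
  by_cases hb : blkOf p s i < s
  · rw [if_pos hb, if_pos hb]
    by_cases hbs : blkOf p s i = s - 1
    · rw [hbs, hcum _ le_rfl, hp']
      split_ifs <;> omega
    · rw [hp'_ne _ hbs, hcum _ (by omega), hc' _ (by omega)]
  · rw [if_neg hb, if_neg hb]

theorem muMinus_congr_of_le_one {c c' : ℕ → ℕ} {i : ℕ} (hi : i + 1 < cumsum p s)
    (hc : c (s - 1) ≤ 1) (hc' : c' (s - 1) ≤ 1) (h : ∀ k < s - 1, c k = c' k) :
    muMinus s d p c i = muMinus s d p c' i := by
  have hs := pos_of_lt_cumsum (Nat.lt_of_succ_lt hi)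
  unfold muMinus
  by_cases hb : blkOf p s i < s
  · rw [if_pos hb, if_pos hb]
    by_cases hbs : blkOf p s i = s - 1
    · have h1 := cumsum_blkOf_le p s i
      have h2 := cumsum_succ p (s - 1)
      rw [Nat.sub_add_cancel hs] at h2
      rw [hbs] at h1 ⊢
      split_ifs <;> omega
    · rw [h _ (by omega)]
  · rw [if_neg hb, if_neg hb]

end Blocks

section DeltaCx

variable {K : Type} [Field K] {n s : ℕ} {d p : ℕ → ℕ}

theorem deltaCx_symIdealM_succ (r : ℕ) (L : Fin r → Fin n → ℕ)
    (hd : ∀ k, k + 1 < s → d (k + 1) < d k) (c : ℕ → ℕ) :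
    DeltaCx K (n + 1) (symIdealM K (n + 1) n r L) s d p c =
      DeltaCx K n (symIdealM K n n r L) s d p c := by
  ext F
  exact and_congr_right fun _ => mon_mem_symIdealM_succ_iff n r L _ fun t =>
    muMinus_antitone hd _ _ (Fin.le_last t)

theorem deltaCx_congr_sizes (I : Ideal (MvPolynomial (Fin n) K)) {p' : ℕ → ℕ}
    (h : ∀ k < s, p' k = p k) (c : ℕ → ℕ) :
    DeltaCx K n I s d p' c = DeltaCx K n I s d p c := by
  simp only [DeltaCx, muMinus_congr_sizes h]

theorem deltaCx_shrink_lastBlock (I : Ideal (MvPolynomial (Fin n) K)) {c : ℕ → ℕ}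
    (hn : cumsum p s = n + 1) (hc : 0 < c (s - 1)) :
    DeltaCx K n I s d (fun k => if k = s - 1 then p k - 1 else p k)
      (fun k => if k = s - 1 then c k - 1 else c k) = DeltaCx K n I s d p c := by
  ext F
  refine and_congr_right fun _ => ?_
  have hμ : ∀ t : Fin n, muMinus s d (fun k => if k = s - 1 then p k - 1 else p k)
      (fun j => (if j = s - 1 then c j - 1 else c j) + eF F j) t =
      muMinus s d p (fun j => c j + eF F j) t := fun t =>
    muMinus_shrink_lastBlock (by omega) (by simp only [if_pos]; omega)
      fun k hk => by simp only [if_neg hk.ne]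
  simp only [hμ]

theorem isCone_deltaCx (I : Ideal (MvPolynomial (Fin n) K)) {c : ℕ → ℕ}
    (hn : cumsum p s = n + 1) (hc : c (s - 1) = 0) :
    IsCone (DeltaCx K n I s d p c) (s - 1) := by
  have hs := pos_of_lt_cumsum (show n < cumsum p s by omega)
  intro F
  have hμ : ∀ t : Fin n, muMinus s d p (fun j => c j + eF F j) t =
      muMinus s d p (fun j => c j + eF (insert (s - 1) F) j) t := fun t =>
    muMinus_congr_of_le_one (by omega) (by simp only [eF]; split_ifs <;> omega)
      (by simp only [eF]; split_ifs <;> omega)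
      fun k hk => by simp only [eF, Finset.mem_insert, hk.ne, false_or]
  simp only [DeltaCx, Set.mem_ofPred_eq, Finset.insert_subset_iff, Finset.mem_range,
    Nat.sub_lt hs one_pos, true_and, hμ]

end DeltaCx

theorem statement_17_general (K : Type) [Field K] (n r : ℕ)
    (L : Fin r → Fin n → ℕ)
    (s : ℕ) (d p : ℕ → ℕ)
    (hn : n + 1 = cumsum p (s + 1))
    (hd : ∀ k, k + 1 < s → d (k + 1) < d k)
    (c : ℕ → ℕ)
    (i : ℕ) :
    (muOf s d p n = 0 →
      gammaDim K (n + 1) (symIdealM K (n + 1) n r L) s d p c i =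
        gammaDim K n (symIdealM K n n r L) s d (fun k => if k = s then p k - 1 else p k) c i) ∧
    (0 < muOf s d p n →
      (c (s - 1) = 0 →
        gammaDim K (n + 1) (symIdealM K (n + 1) n r L) s d p c i = 0) ∧
      (0 < c (s - 1) →
        gammaDim K (n + 1) (symIdealM K (n + 1) n r L) s d p c i =
          gammaDim K n (symIdealM K n n r L) s d
            (fun k => if k = s - 1 then p k - 1 else p k)
            (fun k => if k = s - 1 then c k - 1 else c k) i)) := by
  simp only [gammaDim, deltaCx_symIdealM_succ r L hd]
  refine ⟨fun _ => ?_, fun hμ => ?_⟩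
  · rw [deltaCx_congr_sizes _ fun k hk => if_neg hk.ne]
  · have hlt := lt_cumsum_of_muOf_pos hμ
    have hcum : cumsum p s = n + 1 := le_antisymm (hn ▸ cumsum_mono p s.le_succ) hlt
    exact ⟨fun hc => rhd0_eq_zero_of_isCone (isCone_deltaCx _ hcum hc) i,
      fun hc => by rw [deltaCx_shrink_lastBlock _ hcum hc]⟩

/-- Let `λ^1, …, λ^r ∈ P_n` and `I_m = ⟨λ^1, …, λ^r⟩_{S_m}` for
`m ∈ {n, n+1}`.  Let `μ = (μ_1, …, μ_{n+1}) ∈ P_{n+1}` have block data `(s, d, p)`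
(so `μ_{n+1} = muOf s d p n`), `c ≤ p(μ)`, `0 ≤ i ≤ n`.  Then:
(i) if `μ_{n+1} = 0` then `γ_i^{μ,c}(I_{n+1}) = γ_i^{(μ_1,…,μ_n),c}(I_n)` (the restricted
partition has the last block size `p_{s+1}` decreased by one);
(ii) if `μ_{n+1} > 0` then `γ_i^{μ,c}(I_{n+1}) = 0` when `c_s = 0`, and
`γ_i^{μ,c}(I_{n+1}) = γ_i^{(μ_1,…,μ_n), c - e_s}(I_n)` when `c_s > 0` (the restricted
partition has `p_s` decreased by one).  Blocks are `0`-indexed, so `c_s = c (s-1)`. -/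
theorem statement_17 (K : Type) [Field K] (n r : ℕ)
    (L : Fin r → Fin n → ℕ) (hL : ∀ j, Antitone (L j))
    (s : ℕ) (d p : ℕ → ℕ)
    (hn : n + 1 = cumsum p (s + 1))
    (hd : ∀ k, k + 1 < s → d (k + 1) < d k)
    (hdpos : ∀ k, k < s → 0 < d k)
    (hppos : ∀ k, k < s → 0 < p k)
    (c : ℕ → ℕ) (hc : ∀ k, k < s → c k + 1 ≤ p k)
    (i : ℕ) (hi : i ≤ n) :
    (muOf s d p n = 0 →
      gammaDim K (n + 1) (symIdealM K (n + 1) n r L) s d p c i =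
        gammaDim K n (symIdealM K n n r L) s d (fun k => if k = s then p k - 1 else p k) c i) ∧
    (0 < muOf s d p n →
      (c (s - 1) = 0 →
        gammaDim K (n + 1) (symIdealM K (n + 1) n r L) s d p c i = 0) ∧
      (0 < c (s - 1) →
        gammaDim K (n + 1) (symIdealM K (n + 1) n r L) s d p c i =
          gammaDim K n (symIdealM K n n r L) s d
            (fun k => if k = s - 1 then p k - 1 else p k)
            (fun k => if k = s - 1 then c k - 1 else c k) i)) :=
  statement_17_general K n r L s d p hn hd c i
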